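/- In a normal semantic channel coding system that correctly codes at precision level δ(·), the semantic communication rate never exceeds the semantic channel capacity for sufficiently large n: it cannot hold that SC(SCh_n, δ(n)) < SR(code_n) for all n beyond some n₀. Concretely: if for the input distribution M⁺_n uniform on the 2^{k(n)} codewords {code_n(m⁺) : m⁺ ∈ {0,1}^{k(n)}} the receiver recovers X(m⁺) exactly (so the conditional semantic information amount SA(X(code_n(m⁺)) : 𝒵, δ(n)) = 0 for every codeword), then SC(SCh_n, δ(n)) ≥ (1/n)·H(M⁺_n) = k(n)/n = SR(code_n). -/
import Mathlib


def IsPmf {α : Type} [Fintype α] (p : α → ℝ) : Prop :=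
  (∀ x, 0 ≤ p x) ∧ ∑ x, p x = 1

/-- Shannon entropy (in bits) of a pmf on a finite type. -/
noncomputable def H₂ {α : Type} [Fintype α] (p : α → ℝ) : ℝ :=
  -∑ x, p x * Real.logb 2 (p x)

/-- converse of the semantic channel coding theorem,
concrete form. Let `Msp` be the (finite) semantics space of a normal
semantic channel, `SAc m` the conditional semantic information amount
`SA(X(m) : 𝒵, δ(n))`, and `code` an injective coding of `k`-bit messages
into `Msp`. If the receiver recovers every codeword exactly — i.e.
`SAc (code mp) = 0` for all `mp` — then, for the input distribution `M⁺`
uniform on the `2^k` codewords, `H(M⁺) = k`, and any `SC` that upper-bounds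
`(H(M) − E_M[SAc]) / n` over all input distributions `M` (in particular the
semantic channel capacity, which is the maximum of these) satisfies
`SC ≥ k/n = SR(code)`: the rate cannot exceed the capacity. -/
theorem semantic_channel_coding_converse
    {Msp : Type} [Fintype Msp] [DecidableEq Msp]
    (n k : ℕ) (hn : 0 < n)
    (SAc : Msp → ℝ) (hSAc : ∀ m, 0 ≤ SAc m)
    (code : (Fin k → Bool) → Msp) (hinj : Function.Injective code)
    (hrecover : ∀ mp : Fin k → Bool, SAc (code mp) = 0)
    (Mplus : Msp → ℝ)
    (hMplus : Mplus = fun m =>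
      if m ∈ Finset.univ.image code then ((2 : ℝ) ^ k)⁻¹ else 0)
    (SC : ℝ)
    (hSC : ∀ M : Msp → ℝ, IsPmf M →
      (H₂ M - ∑ m, M m * SAc m) / n ≤ SC) :
    H₂ Mplus = k ∧ (k : ℝ) / n ≤ SC := by
  set S : Finset Msp := Finset.univ.image code with hS
  have hcard : (S.card : ℝ) = (2:ℝ)^k := by
    have : S.card = Fintype.card (Fin k → Bool) := by
      rw [hS, Finset.card_image_of_injective _ hinj, Finset.card_univ]
    rw [this]
    simp [Fintype.card_fun]
  have h2k : (0:ℝ) < (2:ℝ)^k := by positivity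
  -- sum of Mplus over univ
  have hsum : ∑ m, Mplus m = 1 := by
    rw [hMplus]
    rw [Finset.sum_ite_mem, Finset.univ_inter, Finset.sum_const, nsmul_eq_mul, hcard]
    field_simp
  have hpmf : IsPmf Mplus := by
    constructor
    · intro x; rw [hMplus]; dsimp; split <;> positivity
    · exact hsum
  have hH : H₂ Mplus = k := by
    unfold H₂
    rw [hMplus]
    have : ∀ m : Msp, (if m ∈ S then ((2:ℝ)^k)⁻¹ else 0) *
        Real.logb 2 (if m ∈ S then ((2:ℝ)^k)⁻¹ else 0) =
        (if m ∈ S then ((2:ℝ)^k)⁻¹ * Real.logb 2 (((2:ℝ)^k)⁻¹) else 0) := by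
      intro m; split <;> simp
    simp only [this]
    rw [Finset.sum_ite_mem, Finset.univ_inter, Finset.sum_const, nsmul_eq_mul, hcard]
    rw [Real.logb_inv, Real.logb_pow]
    simp [Real.logb_self_eq_one]
  refine ⟨hH, ?_⟩
  have hE : ∑ m, Mplus m * SAc m = 0 := by
    apply Finset.sum_eq_zero
    intro m _
    by_cases h : m ∈ S
    · obtain ⟨mp, _, rfl⟩ := Finset.mem_image.mp h
      rw [hrecover]; ring
    · rw [hMplus]; simp [h]
  have := hSC Mplus hpmf
  rw [hH, hE, sub_zero] at this
  exact this
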